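/- arXiv:2106.14329 — 4 statements merged into one kernel-verified Lean document; each statement's English description precedes it below -/
import Mathlib

section
/- Let (R, m, k) be a complete Noetherian local ring, E = E_R(k) the injective hull of the residue field, and M a finitely generated R-module. Then the natural map M → Hom_R(Hom_R(M, E), E) is an isomorphism, and Hom_R(M, E) is an Artinian R-module. -/
/-!
A nonzero `x` spans a copy of `R ⧸ ann x`, which maps onto `k ⊆ E`; injectivity of `E` extends
this map, so `E` cogenerates and evaluation into the double dual is injective.

Surjectivity of evaluation passes to quotients, finite products and extensions. It holds for `k`,
since every element of `E` killed by `m` lies in `k`, hence for all finitely generated modules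
killed by a power of `m`. For `R ⧸ m ^ n` it says that every endomorphism of `E` acts on the
`m ^ n`-torsion `E_n` as a scalar. These scalars are compatible modulo `m ^ n`, and `E` is the union
of the `E_n` by Krull's intersection theorem and essentiality of `k`, so their limit in the complete
ring `R` shows `End E = R`: evaluation is onto for `R`, hence for all finitely generated modules.
The same fact shows that a submodule of `E` is determined by its annihilator, so `E` is Artinian
because `R` is Noetherian, and so is `Hom(M, E) ⊆ E ^ b`.
-/

open Function IsLocalRing
open LinearMap (applyₗ lcomp lcomp_injective_of_surjective exact_lcomp_of_exact_of_surjective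
  exact_zero_iff_surjective)

universe u v w

section EvalSurjective

variable {R : Type*} [CommRing R] {E : Type*} [AddCommGroup E] [Module R E]
  {A B C : Type*} [AddCommGroup A] [Module R A] [AddCommGroup B] [Module R B]
  [AddCommGroup C] [Module R C]

variable (R E) in
abbrev EvalSurjective (M : Type*) [AddCommGroup M] [Module R M] : Prop :=
  Surjective (applyₗ (R := R) (M := M) (M₂ := E))

theorem Module.Baer.lcomp_surjective (hB : Module.Baer R E) {f : A →ₗ[R] B}
    (hf : Function.Injective f) : Surjective (lcomp R E f) :=
  hB.extension_property f hf

theorem EvalSurjective.of_surjective (hB : Module.Baer R E) {f : A →ₗ[R] B} (hf : Surjective f)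
    (hA : EvalSurjective R E A) : EvalSurjective R E B := by
  intro ξ
  obtain ⟨ζ, rfl⟩ := hB.lcomp_surjective (lcomp_injective_of_surjective f hf) ξ
  obtain ⟨a, rfl⟩ := hA ζ
  exact ⟨f a, rfl⟩

/-- The four lemma, applied to `0 → A → B → C → 0` and its double dual, which is again exact
because `E` is injective. -/
theorem EvalSurjective.of_exact (hB : Module.Baer R E) {i : A →ₗ[R] B} {q : B →ₗ[R] C}
    (hiq : Exact i q) (hi : Injective i) (hq : Surjective q)
    (hA : EvalSurjective R E A) (hC : EvalSurjective R E C) : EvalSurjective R E B := by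
  have hdual : Exact (lcomp R E q) (lcomp R E i) := exact_lcomp_of_exact_of_surjective E hiq hq
  have hbidual : Exact (lcomp R E (lcomp R E i)) (lcomp R E (lcomp R E q)) :=
    exact_lcomp_of_exact_of_surjective E hdual (hB.lcomp_surjective hi)
  have hq' : Surjective (lcomp R E (lcomp R E q)) :=
    hB.lcomp_surjective (lcomp_injective_of_surjective q hq)
  exact LinearMap.surjective_of_surjective_of_surjective_of_injective i q (0 : C →ₗ[R] Unit)
    _ _ (0 : _ →ₗ[R] Unit) applyₗ applyₗ (applyₗ (M := C) (M₂ := E)) 0 rfl rfl rfl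
    ((exact_zero_iff_surjective _ _).2 hq) hbidual ((exact_zero_iff_surjective _ _).2 hq')
    hA hC (fun _ _ _ => Subsingleton.elim _ _)

theorem EvalSurjective.pi {κ : Type*} [Fintype κ] (hA : EvalSurjective R E A) :
    EvalSurjective R E (κ → A) := by
  classical
  intro ξ
  choose a ha using fun i => hA (lcomp R E (lcomp R E (LinearMap.proj i)) ξ)
  refine ⟨a, LinearMap.ext fun φ => ?_⟩
  set ψ := (LinearMap.lsum R (fun _ : κ => A) R).symm φ
  rw [← (LinearMap.lsum R (fun _ : κ => A) R).apply_symm_apply φ, LinearMap.lsum_apply]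
  simp only [LinearMap.applyₗ_apply_apply, map_sum, LinearMap.comp_apply, LinearMap.proj_apply]
  exact Finset.sum_congr rfl fun i _ => DFunLike.congr_fun (ha i) (ψ i)

theorem evalSurjective_self (h : ∀ g : E →ₗ[R] E, ∃ r : R, ∀ x, g x = r • x) :
    EvalSurjective R E R := by
  intro ξ
  let ℓ := LinearMap.ringLmapEquivSelf R R E
  obtain ⟨r, hr⟩ := h (ξ ∘ₗ ℓ.symm.toLinearMap)
  refine ⟨r, LinearMap.ext fun φ => ?_⟩
  calc φ r = r • φ 1 := by rw [← map_smul, smul_eq_mul, mul_one]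
    _ = ξ φ := by rw [← hr]; exact congrArg ξ (ℓ.symm_apply_apply φ)

theorem exists_smul_eq_on_torsionBySet {I : Ideal R} (hI : EvalSurjective R E (R ⧸ I))
    (g : E →ₗ[R] E) : ∃ r : R, ∀ y ∈ Submodule.torsionBySet R E I, g y = r • y := by
  obtain ⟨q, hq⟩ := hI (LinearMap.applyₗ 1 ∘ₗ LinearMap.llcomp R (R ⧸ I) E E g)
  obtain ⟨r, rfl⟩ := Ideal.Quotient.mk_surjective q
  refine ⟨r, fun y hy => ?_⟩
  have hker : I ≤ LinearMap.ker (LinearMap.toSpanSingleton R E y) := fun a ha =>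
    (Submodule.mem_torsionBySet_iff _ _).1 hy ⟨a, ha⟩
  have h := (DFunLike.congr_fun hq (I.liftQ _ hker)).symm
  -- `I.liftQ _ hker` sends the class of `s` to `s • y`
  change g ((1 : R) • y) = r • y at h
  rwa [one_smul] at h

end EvalSurjective

theorem isArtinian_linearMap {R : Type*} [CommRing R] {E : Type*} [AddCommGroup E] [Module R E]
    [IsArtinian R E] (M : Type*) [AddCommGroup M] [Module R M] [Module.Finite R M] :
    IsArtinian R (M →ₗ[R] E) := by
  obtain ⟨b, π, hπ⟩ := Module.Finite.exists_fin' R M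
  have : IsArtinian R ((Fin b → R) →ₗ[R] E) :=
    isArtinian_of_linearEquiv (LinearEquiv.piRing R E (Fin b) R).symm
  exact isArtinian_of_injective (lcomp R E π) (lcomp_injective_of_surjective π hπ)

theorem Module.induction_on_pow_le_annihilator {R : Type u} [CommRing R] [IsNoetherianRing R]
    (I : Ideal R) {P : ∀ (X : Type v) [AddCommGroup X] [Module R X], Prop}
    (torsion : ∀ (X : Type v) [AddCommGroup X] [Module R X] [Module.Finite R X],
      I ≤ Module.annihilator R X → P X)
    (extension : ∀ (X : Type v) [AddCommGroup X] [Module R X] (N : Submodule R X),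
      P N → P (X ⧸ N) → P X)
    (n : ℕ) (X : Type v) [AddCommGroup X] [Module R X] [Module.Finite R X]
    (hX : I ^ n ≤ Module.annihilator R X) : P X := by
  induction n generalizing X with
  | zero => exact torsion X (le_top.trans (by simpa using hX))
  | succ n ih =>
    refine extension X (I ^ n • ⊤) (torsion _ ?_) (ih _ ?_)
    · rwa [← Submodule.annihilator_top, Submodule.le_annihilator_iff, pow_succ',
        Submodule.mul_smul, ← Submodule.le_annihilator_iff] at hX
    · rw [← SetLike.coe_subset_coe, ← Module.isTorsionBySet_iff_subset_annihilator]
      exact Module.isTorsionBySet_quotient_ideal_smul X _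

theorem small_of_small_submodule_of_small_quotient {R : Type*} [Ring R] {X : Type*}
    [AddCommGroup X] [Module R X] (N : Submodule R X) [Small.{w} N] [Small.{w} (X ⧸ N)] :
    Small.{w} X :=
  (small_congr (AddSubgroup.addGroupEquivQuotientProdAddSubgroup (s := N.toAddSubgroup))).2
    (inferInstanceAs (Small.{w} ((X ⧸ N) × N)))

theorem Ideal.smodEq_iff_sub_mem {R : Type*} [CommRing R] {I : Ideal R} {a b : R} :
    a ≡ b [SMOD (I • ⊤ : Submodule R R)] ↔ a - b ∈ I := by
  rw [SModEq.sub_mem, smul_eq_mul, Ideal.mul_top]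

section IsLocalRing

variable {R : Type*} [CommRing R] [IsLocalRing R]

theorem maximalIdeal_smul_residueField {a : R} (ha : a ∈ maximalIdeal R) (z : ResidueField R) :
    a • z = 0 := by
  rw [Algebra.smul_def, ResidueField.algebraMap_eq, (residue_eq_zero_iff a).2 ha, zero_mul]

theorem exists_surjective_of_maximalIdeal_le_annihilator
    {X : Type*} [AddCommGroup X] [Module R X] [Module.Finite R X]
    (hX : maximalIdeal R ≤ Module.annihilator R X) :
    ∃ (d : ℕ) (π : (Fin d → ResidueField R) →ₗ[R] X), Surjective π := by
  have htor : Module.IsTorsionBySet R X (maximalIdeal R) :=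
    (Module.isTorsionBySet_iff_subset_annihilator R X).2 hX
  let _ : Module (ResidueField R) X := htor.module
  have : IsScalarTower R (ResidueField R) X := htor.isScalarTower
  have : Module.Finite (ResidueField R) X := Module.Finite.of_restrictScalars_finite R _ X
  obtain ⟨d, π, hπ⟩ := Module.Finite.exists_fin' (ResidueField R) X
  exact ⟨d, π.restrictScalars R, hπ⟩

theorem small_of_isAdicComplete {R : Type u} [CommRing R] [IsLocalRing R] [IsNoetherianRing R]
    [IsAdicComplete (maximalIdeal R) R] [Small.{w} (ResidueField R)] : Small.{w} R := by
  have (n : ℕ) : Small.{w} (R ⧸ maximalIdeal R ^ n) :=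
    Module.induction_on_pow_le_annihilator (maximalIdeal R) (P := fun X _ _ => Small.{w} X)
      (fun _ _ _ _ hX => by
        obtain ⟨d, π, hπ⟩ := exists_surjective_of_maximalIdeal_le_annihilator hX
        exact small_of_surjective hπ)
      (fun _ _ _ N _ _ => small_of_small_submodule_of_small_quotient N) n _
      Ideal.annihilator_quotient.ge
  refine small_of_injective (f := fun r (n : ℕ) => Ideal.Quotient.mk (maximalIdeal R ^ n) r)
    fun r s h => (IsHausdorff.eq_iff_smodEq (I := maximalIdeal R)).2 fun n => ?_
  rw [Ideal.smodEq_iff_sub_mem, ← Ideal.Quotient.eq]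
  exact congrFun h n

/-- `Module.Injective` only quantifies over modules in the universe of `E`; the extension property
for arbitrary modules needs `R` to be small there, which completeness provides. -/
theorem Module.Baer.of_injective_of_isAdicComplete {R : Type u} [CommRing R] [IsLocalRing R]
    [IsNoetherianRing R] [IsAdicComplete (maximalIdeal R) R] {E : Type v} [AddCommGroup E]
    [Module R E] [Module.Injective R E] {ι : ResidueField R →ₗ[R] E} (hι : Function.Injective ι) :
    Module.Baer R E :=
  have : Small.{v} (ResidueField R) := small_of_injective hι
  have : Small.{v} R := small_of_isAdicComplete
  Module.Baer.of_injective inferInstance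

variable {E : Type*} [AddCommGroup E] [Module R E] {ι : ResidueField R →ₗ[R] E}

theorem exists_apply_ne_zero (hB : Module.Baer R E) (hι : Injective ι)
    {X : Type*} [AddCommGroup X] [Module R X] {x : X} (hx : x ≠ 0) :
    ∃ φ : X →ₗ[R] E, φ x ≠ 0 := by
  have hann : Ideal.torsionOf R X x ≤ LinearMap.ker (LinearMap.toSpanSingleton R E (ι 1)) := by
    intro a ha
    have hm := le_maximalIdeal (mt (Ideal.torsionOf_eq_top_iff R x).1 hx) ha
    simp [← map_smul, maximalIdeal_smul_residueField hm]
  let φ₀ : (R ∙ x) →ₗ[R] E := Submodule.liftQ _ _ hann ∘ₗ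
    (Ideal.quotTorsionOfEquivSpanSingleton R X x).symm.toLinearMap
  obtain ⟨φ, hφ⟩ := hB.extension_property (R ∙ x).subtype Subtype.val_injective φ₀
  refine ⟨φ, ?_⟩
  have hx' : (⟨x, Submodule.mem_span_singleton_self x⟩ : R ∙ x) =
      Ideal.quotTorsionOfEquivSpanSingleton R X x (Submodule.Quotient.mk 1) := by
    rw [Ideal.quotTorsionOfEquivSpanSingleton_apply_mk, one_smul]
  have := DFunLike.congr_fun hφ ⟨x, Submodule.mem_span_singleton_self x⟩
  simp only [LinearMap.comp_apply, Submodule.subtype_apply] at this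
  rw [this, hx', LinearMap.comp_apply, LinearEquiv.coe_coe, LinearEquiv.symm_apply_apply,
    Submodule.liftQ_apply, LinearMap.toSpanSingleton_apply, one_smul]
  exact hι.ne (one_ne_zero (α := ResidueField R)) |>.trans_eq (map_zero ι)

theorem applyₗ_injective (hB : Module.Baer R E) (hι : Injective ι)
    {X : Type*} [AddCommGroup X] [Module R X] : Injective (applyₗ (R := R) (M := X) (M₂ := E)) := by
  refine (injective_iff_map_eq_zero _).2 fun x hx => by_contra fun h => ?_
  obtain ⟨φ, hφ⟩ := exists_apply_ne_zero hB hι h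
  exact hφ (DFunLike.congr_fun hx φ)

theorem mem_of_forall_smul_eq_zero (hB : Module.Baer R E) (hι : Injective ι) {I : Ideal R}
    {r : R} (h : ∀ y ∈ Submodule.torsionBySet R E I, r • y = 0) : r ∈ I := by
  by_contra hr
  obtain ⟨φ, hφ⟩ := exists_apply_ne_zero hB hι (x := Ideal.Quotient.mk I r)
    (mt Ideal.Quotient.eq_zero_iff_mem.1 hr)
  have hmk (s : R) : Ideal.Quotient.mk I s = s • 1 := by
    rw [Algebra.smul_def, mul_one, Ideal.Quotient.algebraMap_eq]
  refine hφ ?_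
  rw [hmk, map_smul]
  refine h _ ((Submodule.mem_torsionBySet_iff _ _).2 fun a => ?_)
  rw [← map_smul, ← hmk, Ideal.Quotient.eq_zero_iff_mem.2 a.2, map_zero]

theorem isArtinian_of_forall_exists_smul_eq [IsNoetherianRing R] (hB : Module.Baer R E)
    (hι : Injective ι) (h : ∀ g : E →ₗ[R] E, ∃ r : R, ∀ x, g x = r • x) : IsArtinian R E := by
  have le_of_annihilator_le {N₁ N₂ : Submodule R E} (hN : N₂.annihilator ≤ N₁.annihilator) :
      N₁ ≤ N₂ := by
    intro x hx
    by_contra hx₂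
    obtain ⟨φ, hφ⟩ := exists_apply_ne_zero hB hι (x := N₂.mkQ x)
      (by rwa [Ne, Submodule.mkQ_apply, Submodule.Quotient.mk_eq_zero])
    obtain ⟨r, hr⟩ := h (φ ∘ₗ N₂.mkQ)
    have hr₂ : r ∈ N₂.annihilator := Submodule.mem_annihilator.2 fun y hy => by
      rw [← hr, LinearMap.comp_apply, Submodule.mkQ_apply, (Submodule.Quotient.mk_eq_zero N₂).2 hy,
        map_zero]
    exact hφ (by rw [← LinearMap.comp_apply, hr, Submodule.mem_annihilator.1 (hN hr₂) x hx])
  exact StrictAnti.wellFoundedLT (f := Submodule.annihilator) fun N₁ N₂ hlt =>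
    (Submodule.annihilator_mono hlt.le).lt_of_ne fun heq => hlt.not_ge (le_of_annihilator_le heq.ge)

variable (hι : Injective ι) (hess : ∀ N : Submodule R E, N ≠ ⊥ → N ⊓ LinearMap.range ι ≠ ⊥)
include hι hess

theorem range_le_of_ne_bot {N : Submodule R E} (hN : N ≠ ⊥) : LinearMap.range ι ≤ N := by
  have : IsSimpleModule R (ResidueField R) :=
    (isSimpleModule_iff_isSimpleModule_of_algebraMap_surjective residue_surjective).2 inferInstance
  have hatom : IsAtom (LinearMap.range ι) :=
    isSimpleModule_iff_isAtom.1 (IsSimpleModule.congr (LinearEquiv.ofInjective ι hι).symm)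
  exact (hatom.le_iff.1 inf_le_right).resolve_left (hess N hN) ▸ inf_le_left

theorem mem_range_of_forall_smul_eq_zero {y : E} (hy : ∀ a ∈ maximalIdeal R, a • y = 0) :
    y ∈ LinearMap.range ι := by
  obtain rfl | hy0 := eq_or_ne y 0
  · exact zero_mem _
  obtain ⟨r, hr⟩ := Submodule.mem_span_singleton.1 <|
    range_le_of_ne_bot hι hess (mt Submodule.span_singleton_eq_bot.1 hy0) ⟨1, rfl⟩
  have hru : IsUnit r := by
    by_contra h
    rw [hy r h, eq_comm, map_eq_zero_iff ι hι] at hr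
    exact one_ne_zero hr
  rw [← hru.unit_spec, ← Units.smul_def] at hr
  refine ⟨(↑hru.unit⁻¹ : R) • 1, ?_⟩
  rw [map_smul, ← hr, ← Units.smul_def, inv_smul_smul]

theorem exists_eq_smul_of_residueField (f : ResidueField R →ₗ[R] E) : ∃ s : R, f = s • ι := by
  obtain ⟨c, hc⟩ := mem_range_of_forall_smul_eq_zero hι hess (y := f 1) fun a ha => by
    rw [← map_smul, maximalIdeal_smul_residueField ha, map_zero]
  obtain ⟨s, rfl⟩ := residue_surjective c
  refine ⟨s, LinearMap.ext fun z => ?_⟩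
  obtain ⟨t, rfl⟩ := residue_surjective z
  have hres (r : R) : residue R r = r • (1 : ResidueField R) := by
    rw [Algebra.smul_def, mul_one, ResidueField.algebraMap_eq]
  rw [LinearMap.smul_apply, hres t, map_smul, map_smul, ← hc, hres s, map_smul, smul_comm]

theorem evalSurjective_residueField : EvalSurjective R E (ResidueField R) := by
  intro ξ
  have hι_tors {a : R} (ha : a ∈ maximalIdeal R) : a • ι = 0 := LinearMap.ext fun z => by
    rw [LinearMap.smul_apply, ← map_smul, maximalIdeal_smul_residueField ha, map_zero,
      LinearMap.zero_apply]
  obtain ⟨c, hc⟩ := mem_range_of_forall_smul_eq_zero hι hess (y := ξ ι) fun a ha => by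
    rw [← map_smul, hι_tors ha, map_zero]
  refine ⟨c, LinearMap.ext fun f => ?_⟩
  obtain ⟨s, rfl⟩ := exists_eq_smul_of_residueField hι hess f
  rw [LinearMap.applyₗ_apply_apply, map_smul, LinearMap.smul_apply, hc]

theorem evalSurjective_of_pow_le_annihilator [IsNoetherianRing R] (hB : Module.Baer R E) (n : ℕ)
    {X : Type*} [AddCommGroup X] [Module R X] [Module.Finite R X]
    (hX : maximalIdeal R ^ n ≤ Module.annihilator R X) : EvalSurjective R E X :=
  Module.induction_on_pow_le_annihilator (maximalIdeal R) (P := fun X _ _ => EvalSurjective R E X)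
    (fun _ _ _ _ hX => by
      obtain ⟨d, π, hπ⟩ := exists_surjective_of_maximalIdeal_le_annihilator hX
      exact (evalSurjective_residueField hι hess).pi.of_surjective hB hπ)
    (fun _ _ _ N hN hQ => hN.of_exact hB (LinearMap.exact_subtype_mkQ N) N.injective_subtype
      N.mkQ_surjective hQ)
    n X hX

theorem exists_mem_torsionBySet_pow [IsNoetherianRing R] (x : E) :
    ∃ n : ℕ, x ∈ Submodule.torsionBySet R E ↑(maximalIdeal R ^ n) := by
  by_contra! h
  have hne (n : ℕ) : maximalIdeal R ^ n • (R ∙ x) ≠ ⊥ := fun hbot =>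
    h n <| (Submodule.mem_torsionBySet_iff _ _).2 fun a => by
      simpa [hbot] using Submodule.smul_mem_smul a.2 (Submodule.mem_span_singleton_self x)
  have hx : ι 1 ∈ R ∙ x := range_le_of_ne_bot hι hess (by simpa using hne 0) ⟨1, rfl⟩
  have hmem : (⟨ι 1, hx⟩ : R ∙ x) ∈ ⨅ n : ℕ, maximalIdeal R ^ n • (⊤ : Submodule R (R ∙ x)) :=
    Submodule.mem_iInf _ |>.2 fun n =>
      (Submodule.mem_smul_top_iff _ _ _).2 (range_le_of_ne_bot hι hess (hne n) ⟨1, rfl⟩)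
  rw [Ideal.iInf_pow_smul_eq_bot_of_isLocalRing _ (maximalIdeal.isMaximal R).ne_top,
    Submodule.mem_bot, Submodule.mk_eq_zero, map_eq_zero_iff ι hι] at hmem
  exact one_ne_zero hmem

theorem exists_smul_eq_of_isAdicComplete [IsNoetherianRing R] [IsAdicComplete (maximalIdeal R) R]
    (hB : Module.Baer R E) (g : E →ₗ[R] E) : ∃ r : R, ∀ x, g x = r • x := by
  choose r hr using fun n => exists_smul_eq_on_torsionBySet
    (evalSurjective_of_pow_le_annihilator hι hess hB n Ideal.annihilator_quotient.ge) g
  have hcompat {m n : ℕ} (hmn : m ≤ n) :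
      r m ≡ r n [SMOD (maximalIdeal R ^ m • ⊤ : Submodule R R)] := by
    refine Ideal.smodEq_iff_sub_mem.2 (mem_of_forall_smul_eq_zero hB hι fun y hy => ?_)
    rw [sub_smul, ← hr m y hy,
      ← hr n y (Submodule.torsionBySet_le_torsionBySet_pow _ _ hmn _ hy), sub_self]
  obtain ⟨L, hL⟩ := IsPrecomplete.prec inferInstance hcompat
  refine ⟨L, fun x => ?_⟩
  obtain ⟨n, hx⟩ := exists_mem_torsionBySet_pow hι hess x
  rw [hr n x hx, ← sub_eq_zero, ← sub_smul]
  exact (Submodule.mem_torsionBySet_iff _ _).1 hx ⟨_, Ideal.smodEq_iff_sub_mem.1 (hL n)⟩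

end IsLocalRing

/-- **Matlis duality.** Let `(R, m, k)` be a complete Noetherian local ring and `E = E_R(k)`
an injective hull of the residue field `k` (encoded by: `E` is an injective `R`-module
containing `k` via `ι` as an essential submodule).  Then for every finitely generated
`R`-module `M`, the natural evaluation map `M → Hom_R(Hom_R(M, E), E)` is an isomorphism,
and `Hom_R(M, E)` is an Artinian `R`-module. -/
theorem matlis_duality
    (R : Type*) [CommRing R] [IsNoetherianRing R] [IsLocalRing R]
    [IsAdicComplete (IsLocalRing.maximalIdeal R) R]
    (E : Type*) [AddCommGroup E] [Module R E] [Module.Injective R E]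
    (ι : IsLocalRing.ResidueField R →ₗ[R] E) (hι : Function.Injective ι)
    (hess : ∀ N : Submodule R E, N ≠ ⊥ → N ⊓ LinearMap.range ι ≠ ⊥)
    (M : Type*) [AddCommGroup M] [Module R M] [Module.Finite R M] :
    Function.Bijective (LinearMap.applyₗ (R := R) (M := M) (M₂ := E)) ∧
      IsArtinian R (M →ₗ[R] E) := by
  have hB : Module.Baer R E := .of_injective_of_isAdicComplete hι
  have hend := exists_smul_eq_of_isAdicComplete hι hess hB
  have : IsArtinian R E := isArtinian_of_forall_exists_smul_eq hB hι hend
  obtain ⟨b, π, hπ⟩ := Module.Finite.exists_fin' R M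
  exact ⟨⟨applyₗ_injective hB hι, (evalSurjective_self hend).pi.of_surjective hB hπ⟩,
    isArtinian_linearMap M⟩
end

section
/- Let X be a normal projective variety, D a big Q-divisor, Z an integral closed subscheme, and suppose there exists a divisor G such that Z is not contained in Bs|mD + G| for all m ≥ 1. Then there exists an integer M > 0 and m_0 such that ord_Z(|mD|) ≤ M for all m ≥ m_0. -/
open Filter

/-- An abstract setup recording, for a fixed normal projective variety `X` (over a field or a
complete local base) and a fixed integral closed subscheme `Z ⊆ X`, the group of
`ℚ`-divisors on `X` together with linear equivalence, effectivity, ampleness, and the order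
of vanishing `ord_Z` along (the generic point of) `Z`. -/
structure DivisorOrdSetup where
  /-- the group of `ℚ`-divisors on `X` -/
  Div : Type
  [instAddCommGroup : AddCommGroup Div]
  [instModule : Module ℚ Div]
  /-- linear equivalence of `ℚ`-divisors -/
  Lin : Div → Div → Prop
  lin_refl : ∀ D, Lin D D
  lin_symm : ∀ {D E}, Lin D E → Lin E D
  lin_trans : ∀ {D E F}, Lin D E → Lin E F → Lin D F
  lin_add : ∀ {D D' E E'}, Lin D D' → Lin E E' → Lin (D + E) (D' + E')
  /-- effectivity of divisors -/
  Eff : Div → Prop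
  eff_zero : Eff 0
  eff_add : ∀ {D E}, Eff D → Eff E → Eff (D + E)
  /-- the order of vanishing along (the generic point of) `Z`, i.e. the multiplicity of a
  divisor at the generic point of `Z` -/
  ord : Div → ℝ
  ord_add : ∀ D E, ord (D + E) = ord D + ord E
  ord_smul : ∀ (q : ℚ) (D : Div), ord (q • D) = q * ord D
  ord_nonneg : ∀ {D}, Eff D → 0 ≤ ord D
  /-- ample `ℚ`-divisors -/
  Ample : Div → Prop
  /-- Serre-type positivity: for ample `A` and any divisor `E`, some `mA - E` has an
  effective representative. -/
  ample_eff : ∀ {A E}, Ample A → ∃ m : ℕ, 0 < m ∧ ∃ T, Eff T ∧ Lin T ((m : ℚ) • A - E)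

attribute [instance] DivisorOrdSetup.instAddCommGroup DivisorOrdSetup.instModule

namespace DivisorOrdSetup

variable (S : DivisorOrdSetup)

/-- The complete linear system `|D|`: the effective divisors linearly equivalent to `D`. -/
def linsys (D : S.Div) : Set S.Div := {G | S.Eff G ∧ S.Lin G D}

/-- `ord_Z |D|`: the minimum of `ord_Z G` over `G ∈ |D|`. -/
noncomputable def ordLin (D : S.Div) : ℝ := sInf (S.ord '' S.linsys D)

/-- `Z ⊄ Bs |D|`: some member of `|D|` does not vanish along `Z`. -/
def notInBs (D : S.Div) : Prop := ∃ G ∈ S.linsys D, S.ord G = 0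

/-- `D` is big: for every divisor `E`, some `mD - E` has an effective representative. -/
def Big (D : S.Div) : Prop :=
  ∀ E : S.Div, ∃ m : ℕ, 0 < m ∧ ∃ T, S.Eff T ∧ S.Lin T ((m : ℚ) • D - E)

/-- The asymptotic order of vanishing `ord_Z ‖D‖ = inf_m ord_Z |mD| / m`
(over the `m > 0` with `|mD| ≠ ∅`). -/
noncomputable def ordAsymp (D : S.Div) : ℝ :=
  sInf {x | ∃ m : ℕ, 0 < m ∧ (S.linsys ((m : ℚ) • D)).Nonempty ∧
    x = S.ordLin ((m : ℚ) • D) / m}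

end DivisorOrdSetup

/-- Let `X` be a normal projective variety, `D` a big `ℚ`-divisor and `Z` an integral closed
subscheme.  Suppose there exists a divisor `G` such that `Z ⊄ Bs|mD + G|` for all `m ≥ 1`.
Then there exist an integer `M > 0` and `m₀` such that `ord_Z |mD| ≤ M` for all `m ≥ m₀`.
(Implication (b) ⇒ (c) of Theorem D.) -/
theorem bounded_ord_of_not_in_bs
    (S : DivisorOrdSetup) (D G : S.Div)
    (hbig : S.Big D)
    (hG : ∀ m : ℕ, 1 ≤ m → S.notInBs ((m : ℚ) • D + G)) :
    ∃ M : ℕ, 0 < M ∧ ∃ m₀ : ℕ, ∀ m : ℕ, m₀ ≤ m → S.ordLin ((m : ℚ) • D) ≤ M := by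
  obtain ⟨k, hk, T, hTeff, hTlin⟩ := hbig G
  refine ⟨⌈S.ord T⌉₊ + 1, Nat.succ_pos _, k + 1, fun m hm => ?_⟩
  obtain ⟨F, ⟨hFeff, hFlin⟩, hFord⟩ := hG (m - k) (by omega)
  have hmem : F + T ∈ S.linsys ((m : ℚ) • D) := by
    refine ⟨S.eff_add hFeff hTeff, ?_⟩
    have := S.lin_add hFlin hTlin
    have heq : ((m - k : ℕ) : ℚ) • D + G + ((k : ℚ) • D - G) = (m : ℚ) • D := by
      rw [Nat.cast_sub (by omega), sub_smul]
      abel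
    rwa [heq] at this
  have hbdd : BddBelow (S.ord '' S.linsys ((m : ℚ) • D)) := by
    refine ⟨0, fun x ⟨E, hE, hxE⟩ => hxE ▸ S.ord_nonneg hE.1⟩
  have h1 : S.ordLin ((m : ℚ) • D) ≤ S.ord (F + T) :=
    csInf_le hbdd ⟨F + T, hmem, rfl⟩
  have h2 : S.ord (F + T) = S.ord T := by rw [S.ord_add, hFord, zero_add]
  have h3 : S.ord T ≤ (⌈S.ord T⌉₊ + 1 : ℕ) := by
    push_cast
    have := Nat.le_ceil (S.ord T)
    linarith
  linarith [h1, h2 ▸ h1]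
end

section
/- Let X be a normal projective variety, D a big Q-divisor, A a very ample divisor, and Z an integral closed subscheme such that Z is not contained in B(D + (1/i)A) for every integer i > 0. Then the asymptotic order ord_Z(||D||) = lim_m ord_Z(|mD|)/m equals 0. -/
open Filter

namespace DivisorOrdSetup

variable (S : DivisorOrdSetup)

lemma lin_nsmul (n : ℕ) {D E : S.Div} (h : S.Lin D E) :
    S.Lin ((n : ℚ) • D) ((n : ℚ) • E) := by
  induction n with
  | zero => simpa using S.lin_refl 0
  | succ k ih =>
    push_cast
    rw [add_smul, add_smul, one_smul, one_smul]
    exact S.lin_add ih h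

lemma eff_nsmul (n : ℕ) {D : S.Div} (h : S.Eff D) : S.Eff ((n : ℚ) • D) := by
  induction n with
  | zero => simpa using S.eff_zero
  | succ k ih =>
    push_cast
    rw [add_smul, one_smul]
    exact S.eff_add ih h

lemma ord_nonneg_of_mem {D : S.Div} {x : ℝ} (hx : x ∈ S.ord '' S.linsys D) : 0 ≤ x := by
  obtain ⟨G, hG, rfl⟩ := hx
  exact S.ord_nonneg hG.1

lemma ordLin_nonneg {D : S.Div} (hne : (S.linsys D).Nonempty) : 0 ≤ S.ordLin D :=
  le_csInf (hne.image _) fun x hx => S.ord_nonneg_of_mem hx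

lemma ordLin_le {D G : S.Div} (hG : G ∈ S.linsys D) : S.ordLin D ≤ S.ord G :=
  csInf_le ⟨0, fun x hx => S.ord_nonneg_of_mem hx⟩ ⟨G, hG, rfl⟩

end DivisorOrdSetup

/-- Let `X` be a normal projective variety, `D` a big `ℚ`-divisor, `A` a (very) ample divisor,
and `Z` an integral closed subscheme such that `Z ⊄ B(D + (1/i)A)` for every integer `i > 0`
(where `B(E) = ⋂_m Bs|mE|` is the stable base locus).  Then the asymptotic order
`ord_Z ‖D‖ = lim_m ord_Z |mD| / m` equals `0`.  (Implication (a) ⇒ (d) of Theorem D;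
since `D` is big there is `j > 0` with `jD − A ∼ G ≥ 0` effective.) -/
theorem ordAsymp_eq_zero_of_not_in_stable_base_locus
    (S : DivisorOrdSetup) (D A : S.Div) (hA : S.Ample A)
    (hbig : ∃ j : ℕ, 0 < j ∧ ∃ G, S.Eff G ∧ S.Lin G ((j : ℚ) • D - A))
    (h : ∀ i : ℕ, 0 < i →
      ∃ m : ℕ, 0 < m ∧ S.notInBs ((m : ℚ) • (D + (1 / (i : ℚ)) • A))) :
    S.ordAsymp D = 0 := by
  obtain ⟨j, hj, G₀, hG₀eff, hG₀lin⟩ := hbig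
  set T : Set ℝ := {x | ∃ m : ℕ, 0 < m ∧ (S.linsys ((m : ℚ) • D)).Nonempty ∧
    x = S.ordLin ((m : ℚ) • D) / m} with hT
  have hTnonneg : ∀ x ∈ T, 0 ≤ x := by
    rintro x ⟨m, hm, hne, rfl⟩
    exact div_nonneg (S.ordLin_nonneg hne) (Nat.cast_nonneg m)
  have key : ∀ ε : ℝ, 0 < ε → ∃ x ∈ T, x ≤ ε := by
    intro ε hε
    -- choose i large
    obtain ⟨i, hi, hilarge⟩ : ∃ i : ℕ, 0 < i ∧ S.ord G₀ / ((i : ℝ) + j) ≤ ε := by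
      obtain ⟨n, hn⟩ := exists_nat_gt (S.ord G₀ / ε)
      refine ⟨n + 1, n.succ_pos, ?_⟩
      have hd : (0:ℝ) < ((n + 1 : ℕ) : ℝ) + j := by positivity
      rw [div_le_iff₀ hd]
      have hlt : S.ord G₀ < n * ε := by rwa [div_lt_iff₀ hε] at hn
      have hj0 : (0:ℝ) ≤ (j : ℝ) := Nat.cast_nonneg j
      push_cast
      nlinarith
    obtain ⟨m, hm, G, hGmem, hGord⟩ := h i hi
    obtain ⟨hGeff, hGlin⟩ := hGmem
    set M : ℕ := m * (i + j) with hM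
    have hMpos : 0 < M := by positivity
    have hi0 : (i : ℚ) ≠ 0 := Nat.cast_ne_zero.mpr hi.ne'
    -- the combined divisor
    set H : S.Div := (i : ℚ) • G + (m : ℚ) • G₀ with hH
    have hHeff : S.Eff H := S.eff_add (S.eff_nsmul i hGeff) (S.eff_nsmul m hG₀eff)
    have hHlin : S.Lin H ((M : ℚ) • D) := by
      have l1 := S.lin_nsmul i hGlin
      have l2 := S.lin_nsmul m hG₀lin
      have l3 := S.lin_add l1 l2
      have eq : (i : ℚ) • ((m : ℚ) • (D + (1 / (i : ℚ)) • A)) + (m : ℚ) • ((j : ℚ) • D - A)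
          = ((M : ℕ) : ℚ) • D := by
        have : ((M : ℕ) : ℚ) = (m : ℚ) * ((i : ℚ) + (j : ℚ)) := by push_cast [hM]; ring
        rw [this]
        match_scalars <;> field_simp <;> ring_nf
      rw [eq] at l3
      exact l3
    have hHmem : H ∈ S.linsys ((M : ℚ) • D) := ⟨hHeff, hHlin⟩
    have hHord : S.ord H = (m : ℝ) * S.ord G₀ := by
      rw [hH, S.ord_add, S.ord_smul, S.ord_smul, hGord]
      push_cast
      ring
    have hle : S.ordLin ((M : ℚ) • D) ≤ (m : ℝ) * S.ord G₀ := hHord ▸ S.ordLin_le hHmem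
    refine ⟨S.ordLin ((M : ℚ) • D) / M, ⟨M, hMpos, ⟨H, hHmem⟩, rfl⟩, ?_⟩
    have hMR : (0:ℝ) < (M : ℝ) := by exact_mod_cast hMpos
    have hmne : (m : ℝ) ≠ 0 := by exact_mod_cast hm.ne'
    have hijne : ((i : ℝ) + j) ≠ 0 := by positivity
    calc S.ordLin ((M : ℚ) • D) / M ≤ ((m : ℝ) * S.ord G₀) / M := by gcongr
      _ = S.ord G₀ / ((i : ℝ) + j) := by
          rw [hM]; push_cast; field_simp
      _ ≤ ε := hilarge
  have hTne : T.Nonempty := by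
    obtain ⟨x, hx, -⟩ := key 1 one_pos
    exact ⟨x, hx⟩
  have h1 : 0 ≤ sInf T := le_csInf hTne hTnonneg
  have h2 : sInf T ≤ 0 := by
    by_contra hc
    push_neg at hc
    obtain ⟨x, hx, hxle⟩ := key (sInf T / 2) (by linarith)
    have := csInf_le ⟨0, hTnonneg⟩ hx
    linarith
  exact le_antisymm h2 h1
end

section
/- Let X be a normal projective variety, Z ⊆ X an integral closed subscheme, and D, E numerically equivalent big divisors with integer coefficients. Suppose there exist an integer l > 0, an effective divisor G, and for every m > l an inclusion of ideal sheaves O_X(−G) · b_{|mD|} ⊆ b_{|mE|}, where b denotes base ideals. Then ord_Z(||D||) ≥ ord_Z(||E||). -/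
open Filter

namespace DivisorOrdSetup

variable (S : DivisorOrdSetup)

lemma aux_ord_image_nonneg {D : S.Div} : ∀ x ∈ S.ord '' S.linsys D, 0 ≤ x := by
  rintro x ⟨F, hF, rfl⟩; exact S.ord_nonneg hF.1

lemma aux_bddBelow (D : S.Div) : BddBelow (S.ord '' S.linsys D) :=
  ⟨0, fun x hx => S.aux_ord_image_nonneg x hx⟩

lemma aux_ordLin_nonneg (D : S.Div) : 0 ≤ S.ordLin D :=
  Real.sInf_nonneg (S.aux_ord_image_nonneg)

lemma aux_nsmul_mem_linsys {F A : S.Div} (hF : F ∈ S.linsys A) (k : ℕ) :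
    k • F ∈ S.linsys (k • A) := by
  induction k with
  | zero => simpa using ⟨S.eff_zero, S.lin_refl 0⟩
  | succ n ih =>
    rw [succ_nsmul, succ_nsmul]
    exact ⟨S.eff_add ih.1 hF.1, S.lin_add ih.2 hF.2⟩

lemma aux_ord_nsmul (k : ℕ) (F : S.Div) : S.ord (k • F) = k * S.ord F := by
  rw [← Nat.cast_smul_eq_nsmul ℚ, S.ord_smul]
  push_cast; ring

lemma aux_ordLin_le_ord {A F : S.Div} (hF : F ∈ S.linsys A) : S.ordLin A ≤ S.ord F :=
  csInf_le (S.aux_bddBelow A) ⟨F, hF, rfl⟩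

lemma aux_ordLin_nsmul_le {A : S.Div} (hA : (S.linsys A).Nonempty) {k : ℕ} (hk : 0 < k) :
    S.ordLin (k • A) ≤ k * S.ordLin A := by
  rw [mul_comm, ← div_le_iff₀ (by exact_mod_cast hk)]
  apply le_csInf (hA.image _)
  rintro b ⟨F, hF, rfl⟩
  rw [div_le_iff₀ (by exact_mod_cast hk), mul_comm, ← S.aux_ord_nsmul]
  exact S.aux_ordLin_le_ord (S.aux_nsmul_mem_linsys hF k)

end DivisorOrdSetup

/-- Let `X` be a normal projective variety, `Z ⊆ X` an integral closed subscheme (with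
generic point in the regular locus), and `D, E` numerically equivalent big divisors with
integer coefficients.  Suppose there exist `l > 0`, an effective divisor `G`, and for every
`m > l` an inclusion of ideal sheaves `O_X(−G) · b_{|mD|} ⊆ b_{|mE|}`.
Then `ord_Z ‖D‖ ≥ ord_Z ‖E‖`.  (Key step of Theorem C.)

The (ideal sheaves on `X`, ordered by inclusion) are abstracted by the partially ordered
type `Idl` together with the base-ideal map `baseIdeal`, the twisting operation
`twist G b = O_X(−G) · b`, and the order of vanishing `ordI` along `Z`, related to the
divisor data by the stated compatibilities. -/
theorem ordAsymp_le_of_base_ideal_inclusions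
    (S : DivisorOrdSetup)
    (Idl : Type) [PartialOrder Idl]
    (baseIdeal : S.Div → Idl)
    (twist : S.Div → Idl → Idl)
    (ordI : Idl → ℝ)
    (hordI_base : ∀ D : S.Div, ordI (baseIdeal D) = S.ordLin D)
    (hordI_twist : ∀ (G : S.Div) (b : Idl), ordI (twist G b) = S.ord G + ordI b)
    (hordI_anti : ∀ b b' : Idl, b ≤ b' → ordI b' ≤ ordI b)
    (D E : S.Div) (hDbig : S.Big D) (hEbig : S.Big E)
    (hκD : ∃ m : ℕ, 0 < m ∧ (S.linsys ((m : ℚ) • D)).Nonempty)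
    (hκE : ∃ m : ℕ, 0 < m ∧ (S.linsys ((m : ℚ) • E)).Nonempty)
    (G : S.Div) (hG : S.Eff G)
    (l : ℕ) (hl : 0 < l)
    (h : ∀ m : ℕ, l < m → twist G (baseIdeal ((m : ℚ) • D)) ≤ baseIdeal ((m : ℚ) • E)) :
    S.ordAsymp E ≤ S.ordAsymp D := by
  classical
  obtain ⟨m0, hm0, F0, hF0⟩ := hκE
  have key : ∀ n : ℕ, l < n → S.ordLin ((n : ℚ) • E) ≤ S.ord G + S.ordLin ((n : ℚ) • D) := by
    intro n hn
    have := hordI_anti _ _ (h n hn)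
    rwa [hordI_base, hordI_twist, hordI_base] at this
  have hbddE : BddBelow {x | ∃ m : ℕ, 0 < m ∧ (S.linsys ((m : ℚ) • E)).Nonempty ∧
      x = S.ordLin ((m : ℚ) • E) / m} := by
    refine ⟨0, ?_⟩
    rintro x ⟨m, hm, -, rfl⟩
    exact div_nonneg (S.aux_ordLin_nonneg _) (by positivity)
  unfold DivisorOrdSetup.ordAsymp
  apply le_csInf
  · obtain ⟨m, hm, hne⟩ := hκD
    exact ⟨_, m, hm, hne, rfl⟩
  rintro b ⟨m, hm, hne, rfl⟩
  apply le_of_forall_pos_le_add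
  intro ε hε
  set k : ℕ := max (l + 1) (⌈S.ord G / ε⌉₊ + 1) with hkdef
  have hk1 : l < k := lt_of_lt_of_le (Nat.lt_succ_self l) (le_max_left _ _)
  have hkpos : 0 < k := lt_of_le_of_lt (Nat.zero_le l) hk1
  set n : ℕ := k * m0 * m with hndef
  have hnpos : 0 < n := by positivity
  have hln : l < n := by
    calc l < k := hk1
    _ ≤ n := Nat.le_mul_of_pos_right _ (by positivity) |>.trans
      (Nat.le_mul_of_pos_right _ hm)
  -- cast identities
  have hcastD : (k * m0 : ℕ) • ((m : ℚ) • D) = (n : ℚ) • D := by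
    rw [← Nat.cast_smul_eq_nsmul ℚ, smul_smul]
    congr 1
    push_cast [hndef]; ring
  have hcastE : (k * m : ℕ) • ((m0 : ℚ) • E) = (n : ℚ) • E := by
    rw [← Nat.cast_smul_eq_nsmul ℚ, smul_smul]
    congr 1
    push_cast [hndef]; ring
  -- nonemptiness of |nE|
  have hneE : (S.linsys ((n : ℚ) • E)).Nonempty := by
    refine ⟨(k * m) • F0, ?_⟩
    rw [← hcastE]
    exact S.aux_nsmul_mem_linsys hF0 _
  -- ordAsymp E ≤ ordLin(nE)/n
  have step1 : S.ordAsymp E ≤ S.ordLin ((n : ℚ) • E) / n :=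
    csInf_le hbddE ⟨n, hnpos, hneE, rfl⟩
  -- ordLin(nD) ≤ (k*m0) * ordLin(mD)
  have step2 : S.ordLin ((n : ℚ) • D) ≤ (k * m0 : ℕ) * S.ordLin ((m : ℚ) • D) := by
    rw [← hcastD]
    exact S.aux_ordLin_nsmul_le hne (by positivity)
  have hordG : 0 ≤ S.ord G := S.ord_nonneg hG
  have hkR : (0 : ℝ) < k := by exact_mod_cast hkpos
  have hnR : (0 : ℝ) < n := by exact_mod_cast hnpos
  have hmR : (0 : ℝ) < m := by exact_mod_cast hm
  have hGk : S.ord G / n ≤ ε := by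
    have hkn : (k : ℝ) ≤ n := by exact_mod_cast
      (Nat.le_mul_of_pos_right _ (by positivity) |>.trans (Nat.le_mul_of_pos_right _ hm) :
        k ≤ n)
    have h1 : S.ord G / n ≤ S.ord G / k :=
      div_le_div_of_nonneg_left hordG hkR hkn
    have h2 : S.ord G / k ≤ ε := by
      rw [div_le_iff₀ hkR]
      have : S.ord G / ε ≤ (⌈S.ord G / ε⌉₊ : ℝ) := Nat.le_ceil _
      have hk2 : (⌈S.ord G / ε⌉₊ : ℝ) + 1 ≤ (k : ℝ) := by
        exact_mod_cast (le_max_right (l + 1) (⌈S.ord G / ε⌉₊ + 1) : _ ≤ k)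
      nlinarith [div_le_iff₀ hε |>.mp this]
    linarith
  calc S.ordAsymp E ≤ S.ordLin ((n : ℚ) • E) / n := step1
    _ ≤ (S.ord G + S.ordLin ((n : ℚ) • D)) / n := by
        exact div_le_div_of_nonneg_right (key n hln) hnR.le |>.trans_eq rfl
    _ ≤ (S.ord G + (k * m0 : ℕ) * S.ordLin ((m : ℚ) • D)) / n := by
        exact div_le_div_of_nonneg_right (by linarith [step2]) hnR.le
    _ = S.ord G / n + S.ordLin ((m : ℚ) • D) / m := by
        rw [add_div]
        congr 1
        have : (n : ℝ) = (k * m0 : ℕ) * m := by push_cast [hndef]; ring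
        rw [this]
        field_simp
    _ ≤ S.ordLin ((m : ℚ) • D) / m + ε := by linarith
end
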